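/- arXiv:2110.10377 — 2 statements merged into one kernel-verified Lean document; each statement's English description precedes it below -/
import Mathlib

section
/- Let λ ∈ ℤ^{r+1} with λ_1 ≥ ⋯ ≥ λ_{r+1} ≥ 0. The map f : Lu(λ+ρ) → GT(λ+ρ) defined by f(m) = (a_{i,j})_{(i,j)∈Φ⁺} with a_{i,j} := λ_i + r + 1 − i − Σ_{k=j}^{r+1} m_{i,k} is a well-defined bijection from the Lusztig data Lu(λ+ρ) onto the Gelfand–Tsetlin patterns GT(λ+ρ) with top row λ+ρ; its inverse sends a pattern (a_{i,j}) to m with m_{i,j} = a_{i,j+1} − a_{i,j} (where a_{i,r+2} := λ_i + r + 1 − i). In particular the bijection is weight-preserving: ∏_{(i,j)∈Φ⁺}(z_i/z_j)^{m_{i,j}} = ∏_{(i,j)∈Φ⁺}(z_i/z_j)^{a_{i,j+1} − a_{i,j}}. -/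
/-- `(i,j)` is a positive root of `GL_{r+1}`, i.e. `1 ≤ i < j ≤ r+1`. -/
def PosRoot (r : ℕ) (p : ℕ × ℕ) : Prop := 1 ≤ p.1 ∧ p.1 < p.2 ∧ p.2 ≤ r + 1

instance (r : ℕ) (p : ℕ × ℕ) : Decidable (PosRoot r p) :=
  inferInstanceAs (Decidable (1 ≤ p.1 ∧ p.1 < p.2 ∧ p.2 ≤ r + 1))

/-- The finite set of positive roots `Φ⁺` as a `Finset` of pairs. -/
def PosFinset (r : ℕ) : Finset (ℕ × ℕ) :=
  (Finset.Icc 1 (r + 1) ×ˢ Finset.Icc 1 (r + 1)).filter fun p => p.1 < p.2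

/-- The statistic `s_{i,j}(m, λ) = Λ_i + Σ_{k=j}^{r} m_{i+1,k+1} − Σ_{k=j}^{r+1} m_{i,k}`,
where `Λ_i = λ_i − λ_{i+1}`. -/
def sStat (r : ℕ) (lam : ℕ → ℤ) (m : ℕ × ℕ → ℤ) (i j : ℕ) : ℤ :=
  (lam i - lam (i + 1)) + ∑ k ∈ Finset.Icc j r, m (i + 1, k + 1)
    - ∑ k ∈ Finset.Icc j (r + 1), m (i, k)

/-- The Lusztig data `Lu(λ+ρ)`, realized as nonnegative integer-valued functions on
`ℕ × ℕ` vanishing off `Φ⁺` with `s_{i,j}(m,λ) ≥ −1` for all `(i,j) ∈ Φ⁺`. -/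
def LuSet (r : ℕ) (lam : ℕ → ℤ) : Set (ℕ × ℕ → ℤ) :=
  {m | (∀ p, ¬ PosRoot r p → m p = 0) ∧ (∀ p, PosRoot r p → 0 ≤ m p) ∧
    ∀ i j, PosRoot r (i, j) → -1 ≤ sStat r lam m i j}

/-- Extension of a triangular array by the top row `λ + ρ`:
`a_{i,r+2} := λ_i + r + 1 − i`. -/
def ext (r : ℕ) (lam : ℕ → ℤ) (a : ℕ × ℕ → ℤ) (i j : ℕ) : ℤ :=
  if j = r + 2 then lam i + (r + 1 : ℤ) - i else a (i, j)

/-- Gelfand–Tsetlin patterns with top row `λ + ρ`: families of nonnegative integers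
indexed by `Φ⁺` (vanishing off `Φ⁺`) satisfying `a_{i,j+1} ≥ a_{i,j} ≥ a_{i+1,j+1}`. -/
def GTSet (r : ℕ) (lam : ℕ → ℤ) : Set (ℕ × ℕ → ℤ) :=
  {a | (∀ p, ¬ PosRoot r p → a p = 0) ∧
    ∀ i j, PosRoot r (i, j) → 0 ≤ a (i, j) ∧
      a (i, j) ≤ ext r lam a i (j + 1) ∧ ext r lam a (i + 1) (j + 1) ≤ a (i, j)}

/-- The map `f : Lu(λ+ρ) → GT(λ+ρ)`,
`f(m)_{i,j} = λ_i + r + 1 − i − Σ_{k=j}^{r+1} m_{i,k}` on `Φ⁺` (and `0` off `Φ⁺`). -/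
def luToGT (r : ℕ) (lam : ℕ → ℤ) (m : ℕ × ℕ → ℤ) : ℕ × ℕ → ℤ :=
  fun p => if PosRoot r p then
    lam p.1 + (r + 1 : ℤ) - p.1 - ∑ k ∈ Finset.Icc p.2 (r + 1), m (p.1, k)
  else 0

namespace LGTaux

/-- The unconditional array `A_{i,j} = λ_i + r + 1 - i - Σ_{k=j}^{r+1} m_{i,k}`. -/
def A (r : ℕ) (lam : ℕ → ℤ) (m : ℕ × ℕ → ℤ) (i j : ℕ) : ℤ :=
  lam i + (r + 1 : ℤ) - i - ∑ k ∈ Finset.Icc j (r + 1), m (i, k)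

lemma luToGT_eq (r : ℕ) (lam : ℕ → ℤ) (m : ℕ × ℕ → ℤ) {i j : ℕ}
    (h : PosRoot r (i, j)) : luToGT r lam m (i, j) = A r lam m i j := by
  simp [luToGT, A, h]

lemma sum_split (r : ℕ) (m : ℕ × ℕ → ℤ) (i j : ℕ) (hj : j ≤ r + 1) :
    ∑ k ∈ Finset.Icc j (r + 1), m (i, k)
      = m (i, j) + ∑ k ∈ Finset.Icc (j + 1) (r + 1), m (i, k) := by
  have h : Finset.Icc j (r + 1) = insert j (Finset.Icc (j + 1) (r + 1)) := by
    ext x; simp only [Finset.mem_Icc, Finset.mem_insert]; omega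
  rw [h, Finset.sum_insert (by simp [Finset.mem_Icc])]

lemma reindex (r : ℕ) (m : ℕ × ℕ → ℤ) (i j : ℕ) :
    ∑ k ∈ Finset.Icc j r, m (i + 1, k + 1)
      = ∑ k ∈ Finset.Icc (j + 1) (r + 1), m (i + 1, k) := by
  rw [← Finset.map_add_right_Icc j r 1, Finset.sum_map]
  simp [addRightEmbedding_apply]

lemma A_sub (r : ℕ) (lam : ℕ → ℤ) (m : ℕ × ℕ → ℤ) (i j : ℕ) :
    A r lam m i j - A r lam m (i + 1) (j + 1) = sStat r lam m i j + 1 := by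
  unfold A sStat
  rw [reindex r m i j]
  push_cast
  ring

lemma A_top (r : ℕ) (lam : ℕ → ℤ) (m : ℕ × ℕ → ℤ) (i : ℕ) :
    A r lam m i (r + 2) = lam i + (r + 1 : ℤ) - i := by
  unfold A
  rw [Finset.Icc_eq_empty (by omega), Finset.sum_empty]
  ring

lemma ext_luToGT (r : ℕ) (lam : ℕ → ℤ) (m : ℕ × ℕ → ℤ) {i j : ℕ}
    (h : PosRoot r (i, j)) :
    ext r lam (luToGT r lam m) i (j + 1) = A r lam m i (j + 1) := by
  obtain ⟨h1, h2, h3⟩ := h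
  by_cases hj : j = r + 1
  · subst hj
    rw [ext, if_pos rfl, A_top]
  · have hp : PosRoot r (i, j + 1) := ⟨h1, by omega, by omega⟩
    rw [ext, if_neg (by omega), luToGT_eq r lam m hp]

lemma inv_formula (r : ℕ) (lam : ℕ → ℤ) (m : ℕ × ℕ → ℤ) {i j : ℕ}
    (h : PosRoot r (i, j)) :
    m (i, j) = ext r lam (luToGT r lam m) i (j + 1) - luToGT r lam m (i, j) := by
  rw [ext_luToGT r lam m h, luToGT_eq r lam m h]
  have hs := sum_split r m i j h.2.2
  unfold A
  linarith

lemma lam_ge (r : ℕ) (lam : ℕ → ℤ)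
    (hdom : ∀ i, 1 ≤ i → i ≤ r → lam (i + 1) ≤ lam i) :
    ∀ d i, 1 ≤ i → i + d ≤ r + 1 → lam (i + d) ≤ lam i := by
  intro d
  induction d with
  | zero => intro i _ _; simp
  | succ d ih =>
    intro i h1 h2
    have hstep : lam (i + d + 1) ≤ lam (i + d) := hdom (i + d) (by omega) (by omega)
    have := ih i h1 (by omega)
    have hrw : i + (d + 1) = i + d + 1 := rfl
    rw [hrw]
    linarith

lemma lam_nn (r : ℕ) (lam : ℕ → ℤ)
    (hdom : ∀ i, 1 ≤ i → i ≤ r → lam (i + 1) ≤ lam i) (hpos : 0 ≤ lam (r + 1)) :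
    ∀ i, 1 ≤ i → i ≤ r + 1 → 0 ≤ lam i := by
  intro i h1 h2
  have := lam_ge r lam hdom (r + 1 - i) i h1 (by omega)
  rw [show i + (r + 1 - i) = r + 1 by omega] at this
  linarith

lemma A_top_nn (r : ℕ) (lam : ℕ → ℤ)
    (hdom : ∀ i, 1 ≤ i → i ≤ r → lam (i + 1) ≤ lam i) (hpos : 0 ≤ lam (r + 1))
    (m : ℕ × ℕ → ℤ) (i : ℕ) (h1 : 1 ≤ i) (h2 : i ≤ r + 1) :
    0 ≤ A r lam m i (r + 2) := by
  rw [A_top]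
  have := lam_nn r lam hdom hpos i h1 h2
  have : (i : ℤ) ≤ (r : ℤ) + 1 := by exact_mod_cast h2
  have := lam_nn r lam hdom hpos i h1 h2
  linarith

lemma A_nonneg (r : ℕ) (lam : ℕ → ℤ)
    (hdom : ∀ i, 1 ≤ i → i ≤ r → lam (i + 1) ≤ lam i) (hpos : 0 ≤ lam (r + 1))
    (m : ℕ × ℕ → ℤ) (hm : ∀ i j, PosRoot r (i, j) → -1 ≤ sStat r lam m i j) :
    ∀ t i j, PosRoot r (i, j) → r + 1 ≤ j + t → 0 ≤ A r lam m i j := by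
  intro t
  induction t with
  | zero =>
    intro i j h hj
    obtain ⟨h1, h2, h3⟩ := id h
    have hj' : j = r + 1 := by omega
    subst hj'
    have key : A r lam m i (r + 1) - A r lam m (i + 1) (r + 2)
        = sStat r lam m i (r + 1) + 1 := A_sub r lam m i (r + 1)
    have hs := hm i (r + 1) h
    have := A_top_nn r lam hdom hpos m (i + 1) (by omega) (by omega : i + 1 ≤ r + 1)
    linarith
  | succ t ih =>
    intro i j h hj
    obtain ⟨h1, h2, h3⟩ := id h
    have key : A r lam m i j - A r lam m (i + 1) (j + 1)
        = sStat r lam m i j + 1 := A_sub r lam m i j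
    have hs := hm i j h
    by_cases hjr : j = r + 1
    · subst hjr
      have := A_top_nn r lam hdom hpos m (i + 1) (by omega) (by omega)
      linarith
    · have hp : PosRoot r (i + 1, j + 1) := ⟨by omega, by omega, by omega⟩
      have := ih (i + 1) (j + 1) hp (by omega)
      linarith

lemma telescope (g : ℕ → ℤ) :
    ∀ b j, j ≤ b + 1 →
      ∑ k ∈ Finset.Icc j b, (g (k + 1) - g k) = g (b + 1) - g j := by
  intro b
  induction b with
  | zero =>
    intro j hj
    interval_cases j
    · simp
    · simp
  | succ b ih =>
    intro j hj
    rcases Nat.lt_or_ge j (b + 2) with h | h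
    · rw [Finset.sum_Icc_succ_top (by omega : j ≤ b + 1), ih j (by omega)]
      ring
    · have hj2 : j = b + 2 := by omega
      subst hj2
      rw [Finset.Icc_eq_empty (by omega)]
      simp

lemma ext_luToGT' (r : ℕ) (lam : ℕ → ℤ) (m : ℕ × ℕ → ℤ) {i j : ℕ}
    (h : PosRoot r (i, j)) :
    ext r lam (luToGT r lam m) (i + 1) (j + 1) = A r lam m (i + 1) (j + 1) := by
  obtain ⟨h1, h2, h3⟩ := h
  by_cases hj : j = r + 1
  · subst hj; rw [ext, if_pos rfl, A_top]
  · have hp : PosRoot r (i + 1, j + 1) := ⟨by omega, by omega, by omega⟩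
    rw [ext, if_neg (by omega), luToGT_eq r lam m hp]

/-- The candidate inverse map `GT → Lu`. -/
def mOf (r : ℕ) (lam : ℕ → ℤ) (a : ℕ × ℕ → ℤ) : ℕ × ℕ → ℤ :=
  fun p => if PosRoot r p then ext r lam a p.1 (p.2 + 1) - a p else 0

lemma sum_mOf (r : ℕ) (lam : ℕ → ℤ) (a : ℕ × ℕ → ℤ) {i j : ℕ}
    (h : PosRoot r (i, j)) :
    ∑ k ∈ Finset.Icc j (r + 1), mOf r lam a (i, k)
      = (lam i + (r + 1 : ℤ) - i) - a (i, j) := by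
  obtain ⟨h1, h2, h3⟩ := h
  have hcongr : ∀ k ∈ Finset.Icc j (r + 1), mOf r lam a (i, k)
      = ext r lam a i (k + 1) - ext r lam a i k := by
    intro k hk
    rw [Finset.mem_Icc] at hk
    have hp : PosRoot r (i, k) := ⟨h1, by omega, hk.2⟩
    rw [mOf, if_pos hp,
      show ext r lam a i k = a (i, k) from by rw [ext, if_neg (by omega)]]
  rw [Finset.sum_congr rfl hcongr, telescope (ext r lam a i) (r + 1) j (by omega),
    show ext r lam a i (r + 1 + 1) = lam i + (r + 1 : ℤ) - i from by
      rw [ext, if_pos (by omega)],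
    show ext r lam a i j = a (i, j) from by rw [ext, if_neg (by omega)]]

lemma luToGT_mOf (r : ℕ) (lam : ℕ → ℤ) (a : ℕ × ℕ → ℤ)
    (ha0 : ∀ p, ¬ PosRoot r p → a p = 0) :
    luToGT r lam (mOf r lam a) = a := by
  funext p
  by_cases hp : PosRoot r p
  · obtain ⟨i, j⟩ := p
    rw [luToGT_eq r lam _ hp]
    unfold A
    rw [sum_mOf r lam a hp]
    ring
  · rw [ha0 p hp]; simp [luToGT, hp]

end LGTaux

/-- For a dominant weight `λ` with `λ_{r+1} ≥ 0`, the map `f` is a well-defined bijection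
from `Lu(λ+ρ)` onto `GT(λ+ρ)`, with inverse `m_{i,j} = a_{i,j+1} − a_{i,j}`; in
particular the bijection is weight-preserving:
`∏_{(i,j)∈Φ⁺}(z_i/z_j)^{m_{i,j}} = ∏_{(i,j)∈Φ⁺}(z_i/z_j)^{a_{i,j+1} − a_{i,j}}`. -/
theorem lusztig_gt_bijection (r : ℕ) (hr : 1 ≤ r) (lam : ℕ → ℤ)
    (hdom : ∀ i, 1 ≤ i → i ≤ r → lam (i + 1) ≤ lam i) (hpos : 0 ≤ lam (r + 1)) :
    Set.BijOn (luToGT r lam) (LuSet r lam) (GTSet r lam) ∧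
    (∀ m ∈ LuSet r lam, ∀ p, PosRoot r p →
      m p = ext r lam (luToGT r lam m) p.1 (p.2 + 1) - luToGT r lam m p) ∧
    (∀ m ∈ LuSet r lam, ∀ z : ℕ → ℚˣ,
      (∏ p ∈ PosFinset r, (z p.1 / z p.2) ^ m p)
        = ∏ p ∈ PosFinset r,
            (z p.1 / z p.2) ^ (ext r lam (luToGT r lam m) p.1 (p.2 + 1)
              - luToGT r lam m p)) := by
  have hinv : ∀ m : ℕ × ℕ → ℤ, ∀ p, PosRoot r p →
      m p = ext r lam (luToGT r lam m) p.1 (p.2 + 1) - luToGT r lam m p := by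
    rintro m ⟨i, j⟩ h
    exact LGTaux.inv_formula r lam m h
  have hmaps : Set.MapsTo (luToGT r lam) (LuSet r lam) (GTSet r lam) := by
    rintro m ⟨hm0, hm1, hm2⟩
    refine ⟨fun p hp => by simp [luToGT, hp], fun i j h => ?_⟩
    obtain ⟨h1, h2, h3⟩ := id h
    have hA : luToGT r lam m (i, j) = LGTaux.A r lam m i j := LGTaux.luToGT_eq r lam m h
    refine ⟨?_, ?_, ?_⟩
    · rw [hA]
      exact LGTaux.A_nonneg r lam hdom hpos m hm2 (r + 1) i j h (by omega)
    · rw [hA, LGTaux.ext_luToGT r lam m h]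
      have hs := LGTaux.sum_split r m i j h3
      have hmp := hm1 (i, j) h
      unfold LGTaux.A
      linarith
    · rw [hA, LGTaux.ext_luToGT' r lam m h]
      have key := LGTaux.A_sub r lam m i j
      have hs := hm2 i j h
      linarith
  have hinj : Set.InjOn (luToGT r lam) (LuSet r lam) := by
    intro m hm m' hm' heq
    funext p
    by_cases hp : PosRoot r p
    · rw [hinv m p hp, hinv m' p hp, heq]
    · rw [hm.1 p hp, hm'.1 p hp]
  have hsurj : Set.SurjOn (luToGT r lam) (LuSet r lam) (GTSet r lam) := by
    rintro a ⟨ha0, haGT⟩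
    refine ⟨LGTaux.mOf r lam a, ⟨fun p hp => by simp [LGTaux.mOf, hp],
      fun p hp => ?_, fun i j h => ?_⟩, LGTaux.luToGT_mOf r lam a ha0⟩
    · obtain ⟨i, j⟩ := p
      have hle := (haGT i j hp).2.1
      simp only [LGTaux.mOf, if_pos hp]
      linarith
    · have key := LGTaux.A_sub r lam (LGTaux.mOf r lam a) i j
      have hAij : LGTaux.A r lam (LGTaux.mOf r lam a) i j = a (i, j) := by
        unfold LGTaux.A
        rw [LGTaux.sum_mOf r lam a h]
        ring
      have hA' : LGTaux.A r lam (LGTaux.mOf r lam a) (i + 1) (j + 1)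
          = ext r lam a (i + 1) (j + 1) := by
        obtain ⟨h1, h2, h3⟩ := id h
        by_cases hj : j = r + 1
        · subst hj; rw [LGTaux.A_top, ext, if_pos rfl]
        · have hp : PosRoot r (i + 1, j + 1) := ⟨by omega, by omega, by omega⟩
          rw [ext, if_neg (by omega)]
          unfold LGTaux.A
          rw [LGTaux.sum_mOf r lam a hp]
          ring
      rw [hAij, hA'] at key
      have hle := (haGT i j h).2.2
      linarith
  refine ⟨⟨hmaps, hinj, hsurj⟩, fun m _ p hp => hinv m p hp, fun m _ z => ?_⟩
  refine Finset.prod_congr rfl fun p hp => ?_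
  have hpr : PosRoot r p := by
    simp only [PosFinset, Finset.mem_filter, Finset.mem_product, Finset.mem_Icc] at hp
    exact ⟨hp.1.1.1, hp.2, hp.1.2.2⟩
  rw [← hinv m p hpr]
end

section
/- Let F be a field, let (i_1, …, i_N) be any reduced word for the longest element w₀ of S_{r+1}, and let γ_1, …, γ_N be the induced enumeration of the positive roots Φ⁺. Then the map F^N → GL_{r+1}(F) sending (x_1, …, x_N) to the product e_{−γ_1}(x_1) e_{−γ_2}(x_2) ⋯ e_{−γ_N}(x_N) is a bijection from F^N onto the group of lower unitriangular matrices in GL_{r+1}(F); in particular, every lower unitriangular u can be written as u = e_{−γ_1}(x_1) ⋯ e_{−γ_N}(x_N) for unique x_1, …, x_N ∈ F. -/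
open Fin.NatCast in
/-- The simple transposition `s_k` of `S_{r+1}` (0-indexed: it swaps `k` and `k+1`;
it corresponds to the 1-based simple transposition `s_{k+1}`). -/
def sT (r k : ℕ) : Equiv.Perm (Fin (r + 1)) :=
  Equiv.swap (k : Fin (r + 1)) ((k + 1 : ℕ) : Fin (r + 1))

/-- The permutation `s_{i_N} s_{i_{N−1}} ⋯ s_{i_{k+2}} s_{i_{k+1}}` used to define
`γ_{k+1}` from the word `w` (here `k` is 0-indexed). -/
def piPerm (r : ℕ) (w : List ℕ) (k : ℕ) : Equiv.Perm (Fin (r + 1)) :=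
  (((w.drop (k + 1)).reverse).map (sT r)).prod

open Fin.NatCast in
/-- The first index of the positive root `γ_{k+1} = e_{π(a)} − e_{π(a+1)}`, where
`α_{i_{k+1}} = e_a − e_{a+1}` (0-indexed `k`). -/
def gFst (r : ℕ) (w : List ℕ) (k : ℕ) : Fin (r + 1) :=
  piPerm r w k ((w.getD k 0 : ℕ) : Fin (r + 1))

open Fin.NatCast in
/-- The second index of the positive root `γ_{k+1}`. -/
def gSnd (r : ℕ) (w : List ℕ) (k : ℕ) : Fin (r + 1) :=
  piPerm r w k ((w.getD k 0 + 1 : ℕ) : Fin (r + 1))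

variable (F : Type*) [Field F]

/-- The elementary unipotent `e_{−γ_{k+1}}(t) = 1 + t·E_{y,x}` for the root
`γ_{k+1} = e_x − e_y` (0-indexed `k`). -/
def eNegM (r : ℕ) (w : List ℕ) (k : ℕ) (t : F) :
    Matrix (Fin (r + 1)) (Fin (r + 1)) F :=
  1 + Matrix.single (gSnd r w k) (gFst r w k) t

/-- The map `F^N → GL_{r+1}(F)`, `x ↦ e_{−γ_1}(x_1) e_{−γ_2}(x_2) ⋯ e_{−γ_N}(x_N)`. -/
def lowerProd (r : ℕ) (w : List ℕ) (x : Fin (r * (r + 1) / 2) → F) :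
    Matrix (Fin (r + 1)) (Fin (r + 1)) F :=
  (List.ofFn fun k : Fin (r * (r + 1) / 2) => eNegM F r w k.1 (x k)).prod

/-- The lower unitriangular matrices. -/
def LowerUni (r : ℕ) : Set (Matrix (Fin (r + 1)) (Fin (r + 1)) F) :=
  {u | (∀ i, u i i = 1) ∧ ∀ i j, i < j → u i j = 0}

/-!
Write `u_k = s_{i_k} ⋯ s_{i_N}`, so that `γ_k = (u_{k+1}⁻¹ a, u_{k+1}⁻¹ (a + 1))` where
`α_{i_k} = (a, a + 1)`. Left multiplication of `u_{k+1}` by the adjacent transposition `s_{i_k}`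
either adds this pair to the inversion set or removes its reverse, so each step changes the
number of inversions by one. As `w₀` has `N` inversions and the word has `N` letters, every step adds its pair: the
inversion set of `u_k` is `{γ_k, …, γ_N}`, and `k ↦ γ_k` is a bijection onto `Φ⁺`.

Only this bijectivity is used for the matrices. In a product of the `e_{−γ}(x_γ)` over all
positive roots, in any order, the `(j, i)` entry is `x_{(i,j)}` plus a term depending only on the
coordinates of roots of height `< j − i`: every other path from row `j` to column `i` goes
through shorter roots. So the coordinates are recovered, and can be prescribed, by induction on
the height.
-/

section Inversions

open Finset

variable {α : Type*} [LinearOrder α]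

theorem swap_apply_lt_swap_apply_iff {a b x y : α} (hab : a ⋖ b) (hx : ¬(x = a ∧ y = b))
    (hy : ¬(x = b ∧ y = a)) : Equiv.swap a b x < Equiv.swap a b y ↔ x < y := by
  have left_iff {c : α} (ha : c ≠ a) (hb : c ≠ b) : a < c ↔ b < c :=
    ⟨fun h => (hab.ge_of_gt h).lt_of_ne' hb, hab.lt.trans⟩
  have right_iff {c : α} (ha : c ≠ a) (hb : c ≠ b) : c < a ↔ c < b :=
    ⟨fun h => h.trans hab.lt, fun h => (hab.le_of_lt h).lt_of_ne ha⟩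
  rw [Equiv.swap_apply_def, Equiv.swap_apply_def]
  split_ifs <;> subst_vars <;> simp_all

variable [Fintype α]

def inversions (σ : Equiv.Perm α) : Finset (α × α) :=
  {p | p.1 < p.2 ∧ σ p.2 < σ p.1}

theorem mem_inversions {σ : Equiv.Perm α} {p : α × α} :
    p ∈ inversions σ ↔ p.1 < p.2 ∧ σ p.2 < σ p.1 := by
  simp [inversions]

theorem inversions_one : inversions (1 : Equiv.Perm α) = ∅ := by
  ext p
  simpa [mem_inversions] using le_of_lt

theorem inversions_revPerm (n : ℕ) :
    inversions (Fin.revPerm : Equiv.Perm (Fin n)) =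
      ({p | p.1 < p.2} : Finset (Fin n × Fin n)) := by
  ext p
  simp [mem_inversions]

theorem card_filter_fst_lt_snd (n : ℕ) : #{p : Fin n × Fin n | p.1 < p.2} = n * (n - 1) / 2 := by
  rw [card_filter, Fintype.sum_prod_type_right]
  simp only [← card_filter, Finset.filter_gt_eq_Iio, Fin.card_Iio]
  rw [Fin.sum_univ_eq_sum_range (fun j => j), sum_range_id]

theorem inversions_swap_mul {a b : α} (hab : a ⋖ b) {σ : Equiv.Perm α}
    (h : σ⁻¹ a < σ⁻¹ b) :
    inversions (Equiv.swap a b * σ) = insert (σ⁻¹ a, σ⁻¹ b) (inversions σ) := by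
  ext ⟨i, j⟩
  obtain ⟨x, rfl⟩ := (σ⁻¹).surjective i
  obtain ⟨y, rfl⟩ := (σ⁻¹).surjective j
  simp only [Equiv.Perm.coe_inv] at h ⊢
  simp only [mem_insert, mem_inversions, Equiv.Perm.mul_apply, Equiv.apply_symm_apply,
    Prod.mk.injEq, EmbeddingLike.apply_eq_iff_eq]
  by_cases hxy : x = a ∧ y = b
  · obtain ⟨rfl, rfl⟩ := hxy
    simp [h, hab.lt]
  by_cases hyx : x = b ∧ y = a
  · obtain ⟨rfl, rfl⟩ := hyx
    simp [h.not_gt, hab.lt.ne']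
  rw [swap_apply_lt_swap_apply_iff hab (fun h => hyx ⟨h.2, h.1⟩) (fun h => hxy ⟨h.2, h.1⟩)]
  simp [hxy]

theorem card_inversions_swap_mul_of_lt {a b : α} (hab : a ⋖ b) {σ : Equiv.Perm α}
    (h : σ⁻¹ a < σ⁻¹ b) : #(inversions (Equiv.swap a b * σ)) = #(inversions σ) + 1 := by
  rw [inversions_swap_mul hab h, card_insert_of_notMem]
  simp [mem_inversions, hab.lt.not_gt]

theorem card_inversions_swap_mul_of_gt {a b : α} (hab : a ⋖ b) {σ : Equiv.Perm α}
    (h : σ⁻¹ b < σ⁻¹ a) : #(inversions (Equiv.swap a b * σ)) + 1 = #(inversions σ) := by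
  have h' : (Equiv.swap a b * σ)⁻¹ a < (Equiv.swap a b * σ)⁻¹ b := by
    simpa [mul_inv_rev, Equiv.swap_inv] using h
  rw [← card_inversions_swap_mul_of_lt hab h', ← mul_assoc, Equiv.swap_mul_self, one_mul]

theorem card_inversions_swap_mul_le {a b : α} (hab : a ⋖ b) (σ : Equiv.Perm α) :
    #(inversions (Equiv.swap a b * σ)) ≤ #(inversions σ) + 1 := by
  rcases lt_trichotomy (σ⁻¹ a) (σ⁻¹ b) with h | h | h
  · exact (card_inversions_swap_mul_of_lt hab h).le
  · exact absurd (σ⁻¹.injective h) hab.lt.ne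
  · have := card_inversions_swap_mul_of_gt hab h
    omega

end Inversions

section ReducedWord

open Finset Fin.NatCast

variable {r k : ℕ} {w : List ℕ}

def suffixPerm (r : ℕ) (w : List ℕ) (k : ℕ) : Equiv.Perm (Fin (r + 1)) :=
  ((w.drop k).map (sT r)).prod

def root (r : ℕ) (w : List ℕ) (k : ℕ) : Fin (r + 1) × Fin (r + 1) :=
  (gFst r w k, gSnd r w k)

theorem natCast_covBy_natCast_add_one {a : ℕ} (ha : a < r) :
    (a : Fin (r + 1)) ⋖ ((a + 1 : ℕ) : Fin (r + 1)) := by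
  rw [Fin.covBy_iff, Fin.val_cast_of_lt (by omega), Fin.val_cast_of_lt (by omega)]
  exact Order.covBy_add_one a

theorem suffixPerm_length : suffixPerm r w w.length = 1 := by
  simp [suffixPerm]

theorem suffixPerm_of_lt (hk : k < w.length) :
    suffixPerm r w k = sT r (w.getD k 0) * suffixPerm r w (k + 1) := by
  rw [suffixPerm, suffixPerm, List.drop_eq_getElem_cons hk, List.map_cons, List.prod_cons,
    List.getD_eq_getElem _ _ hk]

theorem piPerm_eq_inv_suffixPerm : piPerm r w k = (suffixPerm r w (k + 1))⁻¹ := by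
  rw [piPerm, suffixPerm, List.prod_inv_reverse, List.map_map, ← List.map_reverse]
  congr 2

theorem root_eq : root r w k =
    ((suffixPerm r w (k + 1))⁻¹ (w.getD k 0),
      (suffixPerm r w (k + 1))⁻¹ (w.getD k 0 + 1 : ℕ)) := by
  rw [root, gFst, gSnd, piPerm_eq_inv_suffixPerm]

variable (hletters : ∀ i ∈ w, i < r)
include hletters

theorem getD_lt (hk : k < w.length) : w.getD k 0 < r :=
  hletters _ (List.getD_eq_getElem _ _ hk ▸ List.getElem_mem hk)

theorem card_inversions_suffixPerm_le (hk : k < w.length) :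
    #(inversions (suffixPerm r w k)) ≤ #(inversions (suffixPerm r w (k + 1))) + 1 := by
  rw [suffixPerm_of_lt hk]
  exact card_inversions_swap_mul_le (natCast_covBy_natCast_add_one (getD_lt hletters hk)) _

theorem card_inversions_suffixPerm_le_sub (hk : k ≤ w.length) :
    #(inversions (suffixPerm r w k)) ≤ w.length - k := by
  induction hk using Nat.decreasingInduction with
  | self => simp [suffixPerm_length, inversions_one]
  | of_succ k hk ih =>
    have := card_inversions_suffixPerm_le hletters hk
    omega

variable (hw : #(inversions (w.map (sT r)).prod) = w.length)
include hw

theorem sub_le_card_inversions_suffixPerm (k : ℕ) :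
    w.length - k ≤ #(inversions (suffixPerm r w k)) := by
  induction k with
  | zero => simp [suffixPerm, hw]
  | succ k ih =>
    rcases lt_or_ge k w.length with hk | hk
    · have := card_inversions_suffixPerm_le hletters hk
      omega
    · omega

theorem inversions_suffixPerm_of_lt (hk : k < w.length) :
    inversions (suffixPerm r w k) = insert (root r w k) (inversions (suffixPerm r w (k + 1))) := by
  have hcov := natCast_covBy_natCast_add_one (getD_lt hletters hk)
  rw [root_eq, suffixPerm_of_lt hk]
  refine inversions_swap_mul hcov ?_
  rcases lt_trichotomy ((suffixPerm r w (k + 1))⁻¹ (w.getD k 0))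
    ((suffixPerm r w (k + 1))⁻¹ (w.getD k 0 + 1 : ℕ)) with h | h | h
  · exact h
  · exact absurd ((suffixPerm r w (k + 1))⁻¹.injective h) hcov.lt.ne
  · have hdesc := card_inversions_swap_mul_of_gt hcov h
    rw [← sT, ← suffixPerm_of_lt hk] at hdesc
    have := card_inversions_suffixPerm_le_sub hletters (by omega : k + 1 ≤ w.length)
    have := sub_le_card_inversions_suffixPerm hletters hw k
    omega

theorem inversions_suffixPerm (hk : k ≤ w.length) :
    inversions (suffixPerm r w k) = (Finset.Ico k w.length).image (root r w) := by
  induction hk using Nat.decreasingInduction with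
  | self => simp [suffixPerm_length, inversions_one]
  | of_succ k hk ih =>
    rw [inversions_suffixPerm_of_lt hletters hw hk, ih, ← image_insert,
      insert_Ico_add_one_left_eq_Ico hk]

theorem bijOn_root : Set.BijOn (root r w) (Set.Iio w.length) (inversions (w.map (sT r)).prod) := by
  have himage := inversions_suffixPerm hletters hw (Nat.zero_le _)
  rw [suffixPerm, List.drop_zero, ← range_eq_Ico] at himage
  have hinj : Set.InjOn (root r w) (range w.length) :=
    injOn_of_card_image_eq (by rw [← himage, hw, card_range])
  rw [himage, coe_image, ← coe_range]
  exact hinj.bijOn_image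

end ReducedWord

open Finset in
theorem bijOn_root_of_prod_eq_revPerm {r : ℕ} {w : List ℕ} (hletters : ∀ i ∈ w, i < r)
    (hlen : w.length = r * (r + 1) / 2) (hred : (w.map (sT r)).prod = Fin.revPerm) :
    Set.BijOn (fun k : Fin (r * (r + 1) / 2) => root r w k) Set.univ {p | p.1 < p.2} := by
  have hinv : inversions (w.map (sT r)).prod =
      ({p | p.1 < p.2} : Finset (Fin (r + 1) × Fin (r + 1))) := by
    rw [hred, inversions_revPerm]
  have hw : #(inversions (w.map (sT r)).prod) = w.length := by
    rw [hinv, card_filter_fst_lt_snd, hlen, Nat.add_sub_cancel, mul_comm]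
  have hroot := bijOn_root hletters hw
  rw [hinv, hlen, coe_filter_univ] at hroot
  have hval : Set.BijOn (Fin.val : Fin (r * (r + 1) / 2) → ℕ) Set.univ
      (Set.Iio (r * (r + 1) / 2)) := by
    rw [← Fin.range_val, ← Set.image_univ]
    exact Fin.val_injective.injOn.bijOn_image
  exact hroot.comp hval

section LowerUnitriangular

open Matrix

variable (R ι : Type*) [Semiring R] [Fintype ι] [DecidableEq ι] [LinearOrder ι]

def lowerUnitriangular : Submonoid (Matrix ι ι R) where
  carrier := {u | (∀ i, u i i = 1) ∧ ∀ i j, i < j → u i j = 0}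
  one_mem' := ⟨fun i => one_apply_eq i, fun _ _ hij => one_apply_ne hij.ne⟩
  mul_mem' := by
    rintro u v ⟨hu₁, hu₂⟩ ⟨hv₁, hv₂⟩
    refine ⟨fun i => ?_, fun i j hij => ?_⟩
    · rw [mul_apply, Finset.sum_eq_single i (fun l _ hl => ?_) (by simp), hu₁, hv₁, one_mul]
      rcases hl.lt_or_gt with h | h
      · rw [hv₂ l i h, mul_zero]
      · rw [hu₂ i l h, zero_mul]
    · exact BlockTriangular.mul (b := OrderDual.toDual) (fun i j h => hu₂ i j h)
        (fun i j h => hv₂ i j h) hij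

variable {R ι}

theorem lowerUnitriangular_ext {u v : Matrix ι ι R} (hu : u ∈ lowerUnitriangular R ι)
    (hv : v ∈ lowerUnitriangular R ι) (h : ∀ i j, i < j → u j i = v j i) : u = v := by
  ext i j
  rcases lt_trichotomy i j with hij | rfl | hij
  · rw [hu.2 i j hij, hv.2 i j hij]
  · rw [hu.1, hv.1]
  · exact h j i hij

end LowerUnitriangular

section RootProd

open Matrix Set

variable {R : Type*} [Ring R] {n m : ℕ}

def rootHeight (p : Fin n × Fin n) : ℕ := p.2 - p.1

def rootProd (γ : Fin m → Fin n × Fin n) (x : Fin m → R) : Matrix (Fin n) (Fin n) R :=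
  (List.ofFn fun k => 1 + single (γ k).2 (γ k).1 (x k)).prod

def truncHeight (γ : Fin m → Fin n × Fin n) (h : ℕ) (x : Fin m → R) : Fin m → R :=
  fun k => if rootHeight (γ k) < h then x k else 0

theorem one_add_single_mem_lowerUnitriangular {a b : Fin n} (hab : a < b) (t : R) :
    1 + single b a t ∈ lowerUnitriangular R (Fin n) := by
  refine ⟨fun i => ?_, fun i j hij => ?_⟩
  · rw [Matrix.add_apply, one_apply_eq, single_apply_of_ne, add_zero]
    rintro ⟨rfl, rfl⟩
    exact hab.false
  · rw [Matrix.add_apply, one_apply_ne hij.ne, single_apply_of_ne, add_zero]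
    rintro ⟨rfl, rfl⟩
    exact (hab.trans hij).false

theorem one_add_single_mul_apply (a b : Fin n) (t : R) (M : Matrix (Fin n) (Fin n) R)
    (i j : Fin n) : ((1 + single b a t) * M) j i = M j i + if j = b then t * M a i else 0 := by
  rw [add_mul, one_mul, Matrix.add_apply]
  split_ifs with h
  · rw [h, single_mul_apply_same]
  · rw [single_mul_apply_of_ne _ _ _ _ _ h]

variable {γ : Fin m → Fin n × Fin n}

theorem rootProd_mem_lowerUnitriangular (hγ : ∀ k, (γ k).1 < (γ k).2) (x : Fin m → R) :
    rootProd γ x ∈ lowerUnitriangular R (Fin n) := by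
  refine Submonoid.list_prod_mem _ fun M hM => ?_
  obtain ⟨k, rfl⟩ := List.mem_ofFn.1 hM
  exact one_add_single_mem_lowerUnitriangular (hγ k) (x k)

theorem rootProd_succ (γ : Fin (m + 1) → Fin n × Fin n) (x : Fin (m + 1) → R) :
    rootProd γ x =
      (1 + single (γ 0).2 (γ 0).1 (x 0)) * rootProd (fun k => γ k.succ) (fun k => x k.succ) := by
  simp only [rootProd, List.ofFn_succ, List.prod_cons]


theorem truncHeight_succ (γ : Fin (m + 1) → Fin n × Fin n) (h : ℕ) (x : Fin (m + 1) → R) :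
    (fun k => truncHeight γ h x k.succ) = truncHeight (fun k => γ k.succ) h (fun k => x k.succ) :=
  rfl

theorem rootProd_truncHeight_apply (hγ : ∀ k, (γ k).1 < (γ k).2) (h : ℕ) (x : Fin m → R)
    {i j : Fin n} (hji : (j : ℕ) - i < h) :
    rootProd γ (truncHeight γ h x) j i = rootProd γ x j i := by
  induction m generalizing i j with
  | zero => rfl
  | succ m ih =>
    have ih' := fun {i j : Fin n} => ih (fun k => hγ k.succ) (fun k => x k.succ) (i := i) (j := j)
    rw [rootProd_succ, rootProd_succ, truncHeight_succ, one_add_single_mul_apply,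
      one_add_single_mul_apply, ih' hji]
    congr 1
    split_ifs with hjb
    · have hab := Fin.lt_def.1 (hγ 0)
      subst hjb
      rw [ih' (by omega)]
      by_cases hlow : rootHeight (γ 0) < h
      · rw [truncHeight, if_pos hlow]
      · have hai : (γ 0).1 < i := by
          rw [rootHeight] at hlow
          rw [Fin.lt_def]
          omega
        rw [(rootProd_mem_lowerUnitriangular (fun k => hγ k.succ) _).2 _ i hai, mul_zero,
          mul_zero]
    · rfl

theorem rootProd_apply_of_lt (hγ : ∀ k, (γ k).1 < (γ k).2) (x : Fin m → R) {i j : Fin n}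
    (hij : i < j) :
    rootProd γ x j i =
      rootProd γ (truncHeight γ (j - i) x) j i + ∑ k, if γ k = (i, j) then x k else 0 := by
  induction m generalizing i j with
  | zero => simp [rootProd, one_apply_ne hij.ne']
  | succ m ih =>
    set x' : Fin m → R := fun k => x k.succ
    set P := rootProd (fun k => γ k.succ) x'
    set P' := rootProd (fun k => γ k.succ) (truncHeight (fun k => γ k.succ) (j - i) x')
    have hP : P ∈ lowerUnitriangular R (Fin n) :=
      rootProd_mem_lowerUnitriangular (fun k => hγ k.succ) _
    have hP' : P' ∈ lowerUnitriangular R (Fin n) :=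
      rootProd_mem_lowerUnitriangular (fun k => hγ k.succ) _
    have hab := Fin.lt_def.1 (hγ 0)
    have hfirst : (if j = (γ 0).2 then x 0 * P (γ 0).1 i else 0) =
        (if j = (γ 0).2 then truncHeight γ (j - i) x 0 * P' (γ 0).1 i else 0) +
          if γ 0 = (i, j) then x 0 else 0 := by
      by_cases hjb : j = (γ 0).2
      swap
      · have hne : γ 0 ≠ (i, j) := fun h => hjb (congrArg Prod.snd h).symm
        simp [hjb, hne]
      subst hjb
      rw [Fin.lt_def] at hij
      rcases lt_trichotomy (γ 0).1 i with hai | rfl | hai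
      · have hne : γ 0 ≠ (i, (γ 0).2) := fun h => hai.ne (congrArg Prod.fst h)
        simp [hne, hP.2 _ _ hai, hP'.2 _ _ hai]
      · simp [truncHeight, rootHeight, hP.1, hP'.1]
      · have hne : γ 0 ≠ (i, (γ 0).2) := fun h => hai.ne' (congrArg Prod.fst h)
        have hPP' : P' (γ 0).1 i = P (γ 0).1 i :=
          rootProd_truncHeight_apply (fun k => hγ k.succ) _ _ (by rw [Fin.lt_def] at hai; omega)
        rw [Fin.lt_def] at hai
        have hlow : rootHeight (γ 0) < (γ 0).2 - i := by rw [rootHeight]; omega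
        simp [hne, hPP', truncHeight, hlow]
    rw [rootProd_succ, rootProd_succ, truncHeight_succ, one_add_single_mul_apply,
      one_add_single_mul_apply, Fin.sum_univ_succ, ih (fun k => hγ k.succ) x' hij, hfirst]
    abel

theorem rootProd_apply_root (hγ : ∀ k, (γ k).1 < (γ k).2) (hinj : γ.Injective)
    (x : Fin m → R) (k : Fin m) :
    rootProd γ x (γ k).2 (γ k).1 =
      rootProd γ (truncHeight γ (rootHeight (γ k)) x) (γ k).2 (γ k).1 + x k := by
  rw [rootProd_apply_of_lt hγ x (hγ k)]
  simp only [Prod.mk.eta, hinj.eq_iff, Finset.sum_ite_eq', Finset.mem_univ, if_true]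
  rfl

theorem truncHeight_congr {h : ℕ} {x y : Fin m → R}
    (hxy : ∀ k, rootHeight (γ k) < h → x k = y k) :
    truncHeight γ h x = truncHeight γ h y := by
  ext k
  unfold truncHeight
  split_ifs with hk
  exacts [hxy k hk, rfl]

theorem rootProd_injective (hγ : ∀ k, (γ k).1 < (γ k).2) (hinj : γ.Injective) :
    (rootProd γ : (Fin m → R) → Matrix (Fin n) (Fin n) R).Injective := by
  intro x y hxy
  suffices ∀ h k, rootHeight (γ k) < h → x k = y k from
    funext fun k => this _ k (Nat.lt_succ_self _)
  intro h
  induction h with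
  | zero => exact fun k hk => absurd hk (Nat.not_lt_zero _)
  | succ h ih =>
    intro k hk
    rcases Nat.lt_succ_iff_lt_or_eq.1 hk with hk | rfl
    · exact ih k hk
    · have hx := rootProd_apply_root hγ hinj x k
      have hy := rootProd_apply_root hγ hinj y k
      rw [hxy, truncHeight_congr ih, hy] at hx
      exact (add_left_cancel hx).symm

theorem rootProd_surjOn (hγ : BijOn γ univ {p | p.1 < p.2}) :
    SurjOn (rootProd γ) univ (lowerUnitriangular R (Fin n) : Set (Matrix (Fin n) (Fin n) R)) := by
  have hpos : ∀ k, (γ k).1 < (γ k).2 := fun k => hγ.mapsTo (mem_univ k)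
  have hinj : γ.Injective := injOn_univ.1 hγ.injOn
  intro u hu
  suffices ∀ h, ∃ x, ∀ k, rootHeight (γ k) < h →
      rootProd γ x (γ k).2 (γ k).1 = u (γ k).2 (γ k).1 by
    obtain ⟨x, hx⟩ := this n
    refine ⟨x, mem_univ x, lowerUnitriangular_ext (rootProd_mem_lowerUnitriangular hpos x) hu
      fun i j hij => ?_⟩
    obtain ⟨k, -, hk⟩ := hγ.surjOn (show (i, j) ∈ {p : Fin n × Fin n | p.1 < p.2} from hij)
    have := hx k (by rw [rootHeight]; omega)
    rwa [hk] at this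
  intro h
  induction h with
  | zero => exact ⟨0, fun k hk => absurd hk (Nat.not_lt_zero _)⟩
  | succ h ih =>
    obtain ⟨x, hx⟩ := ih
    let y : Fin m → R := fun k => if rootHeight (γ k) < h then x k else
      u (γ k).2 (γ k).1 - rootProd γ (truncHeight γ h x) (γ k).2 (γ k).1
    have hyx : ∀ k, rootHeight (γ k) < h → y k = x k := fun k hk => if_pos hk
    refine ⟨y, fun k hk => ?_⟩
    rw [rootProd_apply_root hpos hinj]
    rcases Nat.lt_succ_iff_lt_or_eq.1 hk with hk | hk
    · rw [truncHeight_congr fun l hl => hyx l (hl.trans hk), hyx k hk,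
        ← rootProd_apply_root hpos hinj, hx k hk]
    · rw [hk, truncHeight_congr hyx]
      simp only [y, if_neg hk.not_lt]
      abel

theorem rootProd_bijOn (hγ : BijOn γ univ {p | p.1 < p.2}) :
    BijOn (rootProd γ) univ (lowerUnitriangular R (Fin n) : Set (Matrix (Fin n) (Fin n) R)) :=
  ⟨fun x _ => rootProd_mem_lowerUnitriangular (fun k => hγ.mapsTo (mem_univ k)) x,
    (rootProd_injective (fun k => hγ.mapsTo (mem_univ k))
      (injOn_univ.1 hγ.injOn)).injOn,
    rootProd_surjOn hγ⟩

end RootProd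

theorem lowerProd_eq_rootProd (r : ℕ) (w : List ℕ) :
    lowerProd F r w = rootProd (fun k : Fin (r * (r + 1) / 2) => root r w k) :=
  rfl

theorem lowerUni_eq_lowerUnitriangular (r : ℕ) :
    LowerUni F r = ↑(lowerUnitriangular F (Fin (r + 1))) :=
  rfl

theorem lower_unitriangular_unique_coordinates
    (r : ℕ) (w : List ℕ)
    (hlen : w.length = r * (r + 1) / 2)
    (hletters : ∀ i ∈ w, i < r)
    (hred : (w.map (sT r)).prod = Fin.revPerm) :
    Set.BijOn (lowerProd F r w) Set.univ (LowerUni F r) ∧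
    ∀ u ∈ LowerUni F r, ∃! x : Fin (r * (r + 1) / 2) → F, lowerProd F r w x = u := by
  have hbij : Set.BijOn (lowerProd F r w) Set.univ (LowerUni F r) := by
    rw [lowerProd_eq_rootProd, lowerUni_eq_lowerUnitriangular]
    exact rootProd_bijOn (bijOn_root_of_prod_eq_revPerm hletters hlen hred)
  refine ⟨hbij, fun u hu => ?_⟩
  obtain ⟨x, -, rfl⟩ := hbij.surjOn hu
  exact ⟨x, rfl, fun y hy => hbij.injOn trivial trivial hy⟩
end
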